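/- arXiv:math/0205274 — 2 statements merged into one kernel-verified Lean document; each statement's English description precedes it below -/
import Mathlib

section
/- Let P(z) = 4(z-e_1)(z-e_2)(z-e_3) be a cubic polynomial with distinct roots e_1,e_2,e_3, let L be a nonnegative integer and let l, l' be integers with 0 ≤ l, l' ≤ L. Then the expression (P(z_j)/(z_j - z_k)) ∂/∂z_j + (P(z_k)/(z_k - z_j)) ∂/∂z_k applied to the symmetric monomial z_j^l z_k^{l'} + z_j^{l'} z_k^l equals 4L δ_{l,L} (z_j^{L+1} z_k^{l'} + z_j^{l'} z_k^{L+1}) + 4L δ_{l',L} (z_j^l z_k^{L+1} + z_j^{L+1} z_k^l) plus a polynomial which is a linear combination of monomials z_j^t z_k^{t'} with 0 ≤ t, t' ≤ L. -/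
/-!
Write `A(p, q) = x^p y^q - x^q y^p`. For `q ≤ p` it equals
`(x - y) · x^q y^q (x^(p-q-1) + x^(p-q-2) y + ⋯ + y^(p-q-1))`, a multiple of `x - y` by a
polynomial whose exponents lie below `max p q`. Since the operator, multiplied by `x - y`, sends
`x^a y^b + x^b y^a` to `a (P(x) x^(a-1) y^b - P(y) x^b y^(a-1))` plus the same with `a, b` swapped,
it is a combination of `A(a - 1 + k, b)` for `k ≤ 3`. Only `A(L + 2, b)`, arising from the leading
term `4 z³` of `P` when `a = L`, has an exponent beyond `L + 1`, and
`A(L + 2, b) = (x - y)(x^(L+1) y^b + x^b y^(L+1)) + A(L + 1, b + 1)` isolates the leading terms.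
-/

open MvPolynomial Finset

noncomputable section

namespace CubicDiffOp

variable (R : Type*) [CommRing R]

def boxSpan (L : ℕ) : Submodule R (MvPolynomial (Fin 2) R) :=
  Submodule.span R {q | ∃ t t' : ℕ, t ≤ L ∧ t' ≤ L ∧ q = X 0 ^ t * X 1 ^ t'}

def diagMultiples (L : ℕ) : Submodule R (MvPolynomial (Fin 2) R) :=
  (boxSpan R L).map (LinearMap.mulLeft R (X 0 - X 1))

def antisymMonomial (p q : ℕ) : MvPolynomial (Fin 2) R :=
  X 0 ^ p * X 1 ^ q - X 0 ^ q * X 1 ^ p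

variable {R} {L : ℕ}

theorem X_pow_mul_X_pow_mem_boxSpan {t t' : ℕ} (ht : t ≤ L) (ht' : t' ≤ L) :
    X 0 ^ t * X 1 ^ t' ∈ boxSpan R L :=
  Submodule.subset_span ⟨t, t', ht, ht', rfl⟩

theorem mul_mem_diagMultiples {d : MvPolynomial (Fin 2) R} (hd : d ∈ boxSpan R L) :
    (X 0 - X 1) * d ∈ diagMultiples R L :=
  ⟨d, hd, rfl⟩

theorem C_mul_mem_diagMultiples (c : R) {p : MvPolynomial (Fin 2) R}
    (hp : p ∈ diagMultiples R L) : C c * p ∈ diagMultiples R L := by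
  rw [← smul_eq_C_mul]
  exact Submodule.smul_mem _ c hp

theorem antisymMonomial_swap (p q : ℕ) :
    antisymMonomial R q p = -antisymMonomial R p q := by
  simp only [antisymMonomial, neg_sub]

theorem antisymMonomial_mem {p q : ℕ} (hp : p ≤ L + 1) (hq : q ≤ L + 1) :
    antisymMonomial R p q ∈ diagMultiples R L := by
  wlog hqp : q ≤ p generalizing p q
  · rw [antisymMonomial_swap]
    exact neg_mem (this hq hp (le_of_not_ge hqp))
  obtain ⟨k, rfl⟩ := Nat.exists_eq_add_of_le hqp
  have hfactor : antisymMonomial R (q + k) q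
      = (X 0 - X 1) * ∑ i ∈ range k, X 0 ^ q * X 1 ^ q * (X 0 ^ i * X 1 ^ (k - 1 - i)) := by
    rw [← mul_sum, mul_left_comm, mul_comm _ (∑ i ∈ range k, _), geom_sum₂_mul,
      antisymMonomial]
    ring
  rw [hfactor]
  refine mul_mem_diagMultiples (Submodule.sum_mem _ fun i hi => ?_)
  rw [mem_range] at hi
  convert X_pow_mul_X_pow_mem_boxSpan (R := R) (L := L) (t := q + i) (t' := q + (k - 1 - i))
    (by omega) (by omega) using 1
  ring

theorem antisymMonomial_top_mem {b : ℕ} (hb : b ≤ L) :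
    antisymMonomial R (L + 2) b - (X 0 - X 1) * (X 0 ^ (L + 1) * X 1 ^ b + X 0 ^ b * X 1 ^ (L + 1))
      ∈ diagMultiples R L := by
  convert antisymMonomial_mem (R := R) (p := L + 1) (q := b + 1) le_rfl (by omega) using 1
  simp only [antisymMonomial]
  ring

variable (e₁ e₂ e₃ : R)

def cubic (i : Fin 2) : MvPolynomial (Fin 2) R :=
  4 * (X i - C e₁) * (X i - C e₂) * (X i - C e₃)

/-- `(x - y)` times the operator `P(x)/(x - y) ∂ₓ + P(y)/(y - x) ∂_y`, where
`P(z) = 4 (z - e₁)(z - e₂)(z - e₃)`. -/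
def diffOp (f : MvPolynomial (Fin 2) R) : MvPolynomial (Fin 2) R :=
  cubic e₁ e₂ e₃ 0 * pderiv 0 f - cubic e₁ e₂ e₃ 1 * pderiv 1 f

theorem cubic_antisym_expand (m b : ℕ) :
    cubic e₁ e₂ e₃ 0 * (X 0 ^ m * X 1 ^ b) - cubic e₁ e₂ e₃ 1 * (X 0 ^ b * X 1 ^ m)
      = C 4 * antisymMonomial R (m + 3) b
        - C (4 * (e₁ + e₂ + e₃)) * antisymMonomial R (m + 2) b
        + C (4 * (e₁ * e₂ + e₁ * e₃ + e₂ * e₃)) * antisymMonomial R (m + 1) b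
        - C (4 * (e₁ * e₂ * e₃)) * antisymMonomial R m b := by
  simp only [cubic, antisymMonomial, map_add, map_mul, map_ofNat]
  ring

theorem cubic_antisym_mem {m b : ℕ} (hm : m + 3 ≤ L + 1) (hb : b ≤ L + 1) :
    cubic e₁ e₂ e₃ 0 * (X 0 ^ m * X 1 ^ b) - cubic e₁ e₂ e₃ 1 * (X 0 ^ b * X 1 ^ m)
      ∈ diagMultiples R L := by
  rw [cubic_antisym_expand]
  refine sub_mem (add_mem (sub_mem ?_ ?_) ?_) ?_ <;>
    exact C_mul_mem_diagMultiples _ (antisymMonomial_mem (by omega) hb)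

theorem cubic_antisym_top_mem {m b : ℕ} (hb : b ≤ m + 1) :
    cubic e₁ e₂ e₃ 0 * (X 0 ^ m * X 1 ^ b) - cubic e₁ e₂ e₃ 1 * (X 0 ^ b * X 1 ^ m)
      - C 4 * ((X 0 - X 1) * (X 0 ^ (m + 2) * X 1 ^ b + X 0 ^ b * X 1 ^ (m + 2)))
      ∈ diagMultiples R (m + 1) := by
  have hregroup : ∀ u v w z t : MvPolynomial (Fin 2) R,
      C 4 * u - v + w - z - C 4 * t = C 4 * (u - t) - v + w - z := fun _ _ _ _ _ => by ring
  rw [cubic_antisym_expand, hregroup]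
  refine sub_mem (add_mem (sub_mem ?_ ?_) ?_) ?_
  · exact C_mul_mem_diagMultiples _ (antisymMonomial_top_mem hb)
  all_goals exact C_mul_mem_diagMultiples _ (antisymMonomial_mem (by omega) (by omega))

theorem pderiv_zero_X_pow_succ_mul (m b : ℕ) :
    pderiv 0 (X 0 ^ (m + 1) * X 1 ^ b : MvPolynomial (Fin 2) R)
      = C ((m + 1 : ℕ) : R) * (X 0 ^ m * X 1 ^ b) := by
  rw [pderiv_mul, pderiv_pow, pderiv_pow, pderiv_X_self, pderiv_X_of_ne one_ne_zero, map_natCast,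
    Nat.add_sub_cancel]
  ring

theorem pderiv_one_mul_X_pow_succ (m b : ℕ) :
    pderiv 1 (X 0 ^ b * X 1 ^ (m + 1) : MvPolynomial (Fin 2) R)
      = C ((m + 1 : ℕ) : R) * (X 0 ^ b * X 1 ^ m) := by
  rw [pderiv_mul, pderiv_pow, pderiv_pow, pderiv_X_self, pderiv_X_of_ne zero_ne_one, map_natCast,
    Nat.add_sub_cancel]
  ring

theorem cubic_mul_pderiv_sub_mem {a b : ℕ} (ha : a ≤ L) (hb : b ≤ L) :
    cubic e₁ e₂ e₃ 0 * pderiv 0 (X 0 ^ a * X 1 ^ b)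
        - cubic e₁ e₂ e₃ 1 * pderiv 1 (X 0 ^ b * X 1 ^ a)
      - (X 0 - X 1) * ((if a = L then 4 * (L : R) else 0) •
          (X 0 ^ (L + 1) * X 1 ^ b + X 0 ^ b * X 1 ^ (L + 1)))
      ∈ diagMultiples R L := by
  cases a with
  | zero =>
    have hcoeff : (if 0 = L then 4 * (L : R) else 0) = 0 :=
      ite_eq_right_iff.mpr fun h => by simp [← h]
    simp [hcoeff]
  | succ m =>
    rw [pderiv_zero_X_pow_succ_mul, pderiv_one_mul_X_pow_succ]
    obtain rfl | hlt := eq_or_lt_of_le ha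
    · rw [if_pos rfl, smul_eq_C_mul, map_mul]
      convert C_mul_mem_diagMultiples ((m + 1 : ℕ) : R) (cubic_antisym_top_mem e₁ e₂ e₃ hb)
        using 1
      ring
    · rw [if_neg hlt.ne, zero_smul, mul_zero, sub_zero, mul_left_comm,
        mul_left_comm (cubic e₁ e₂ e₃ 1), ← mul_sub]
      exact C_mul_mem_diagMultiples _ (cubic_antisym_mem e₁ e₂ e₃ (by omega) (by omega))

theorem diffOp_symm_monomial_sub_mem {l l' : ℕ} (hl : l ≤ L) (hl' : l' ≤ L) :
    diffOp e₁ e₂ e₃ (X 0 ^ l * X 1 ^ l' + X 0 ^ l' * X 1 ^ l)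
      - (X 0 - X 1) *
        ((if l = L then 4 * (L : R) else 0) •
            (X 0 ^ (L + 1) * X 1 ^ l' + X 0 ^ l' * X 1 ^ (L + 1))
          + (if l' = L then 4 * (L : R) else 0) •
            (X 0 ^ l * X 1 ^ (L + 1) + X 0 ^ (L + 1) * X 1 ^ l))
      ∈ diagMultiples R L := by
  convert add_mem (cubic_mul_pderiv_sub_mem e₁ e₂ e₃ hl hl')
    (cubic_mul_pderiv_sub_mem e₁ e₂ e₃ hl' hl) using 1
  simp only [diffOp, map_add, smul_eq_C_mul]
  ring

end CubicDiffOp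

open CubicDiffOp

theorem stmt_0_general (e₁ e₂ e₃ : ℂ) (L l l' : ℕ) (hl : l ≤ L) (hl' : l' ≤ L) :
    ∃ r ∈ Submodule.span ℂ
      {q : MvPolynomial (Fin 2) ℂ | ∃ t t' : ℕ, t ≤ L ∧ t' ≤ L ∧ q = X 0 ^ t * X 1 ^ t'},
    (4 * (X 0 - C e₁) * (X 0 - C e₂) * (X 0 - C e₃)) *
        pderiv 0 (X 0 ^ l * X 1 ^ l' + X 0 ^ l' * X 1 ^ l)
      - (4 * (X 1 - C e₁) * (X 1 - C e₂) * (X 1 - C e₃)) *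
        pderiv 1 (X 0 ^ l * X 1 ^ l' + X 0 ^ l' * X 1 ^ l)
    = (X 0 - X 1) *
        ((if l = L then (4 * L : ℂ) else 0) • (X 0 ^ (L + 1) * X 1 ^ l' + X 0 ^ l' * X 1 ^ (L + 1))
          + (if l' = L then (4 * L : ℂ) else 0) • (X 0 ^ l * X 1 ^ (L + 1) + X 0 ^ (L + 1) * X 1 ^ l)
          + r) := by
  obtain ⟨r, hr, hr_eq⟩ := diffOp_symm_monomial_sub_mem e₁ e₂ e₃ hl hl'
  refine ⟨r, hr, ?_⟩
  simp only [LinearMap.mulLeft_apply, diffOp, cubic] at hr_eq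
  linear_combination -hr_eq

theorem stmt_0 (e₁ e₂ e₃ : ℂ) (h12 : e₁ ≠ e₂) (h13 : e₁ ≠ e₃) (h23 : e₂ ≠ e₃)
    (L l l' : ℕ) (hl : l ≤ L) (hl' : l' ≤ L) :
    ∃ r ∈ Submodule.span ℂ
      {q : MvPolynomial (Fin 2) ℂ | ∃ t t' : ℕ, t ≤ L ∧ t' ≤ L ∧ q = X 0 ^ t * X 1 ^ t'},
    (4 * (X 0 - C e₁) * (X 0 - C e₂) * (X 0 - C e₃)) *
        pderiv 0 (X 0 ^ l * X 1 ^ l' + X 0 ^ l' * X 1 ^ l)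
      - (4 * (X 1 - C e₁) * (X 1 - C e₂) * (X 1 - C e₃)) *
        pderiv 1 (X 0 ^ l * X 1 ^ l' + X 0 ^ l' * X 1 ^ l)
    = (X 0 - X 1) *
        ((if l = L then (4 * L : ℂ) else 0) • (X 0 ^ (L + 1) * X 1 ^ l' + X 0 ^ l' * X 1 ^ (L + 1))
          + (if l' = L then (4 * L : ℂ) else 0) • (X 0 ^ l * X 1 ^ (L + 1) + X 0 ^ (L + 1) * X 1 ^ l)
          + r) :=
  stmt_0_general e₁ e₂ e₃ L l l' hl hl'
end
end

section
/- Let Ĥ and P̂ be commuting linear operators on the space of polynomials in one variable z, and suppose there is a constant c ∉ ℤ and a nonnegative integer d such that for every polynomial f of degree exactly d + p' with p' ≠ 0 and p' ≠ c, the degree of Ĥ f exceeds the degree of f by exactly one, while Ĥ maps polynomials of degree ≤ d to polynomials of degree ≤ d. Then P̂ also maps the space of polynomials of degree ≤ d into itself, provided P̂ maps that space into polynomials. -/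
/-!
The degrees of `P f` for `f` of degree `≤ d` are bounded, since `V_d` is spanned by finitely many
monomials. If some such `P f` had degree `m > d`, then `P (Hᵏ f) = Hᵏ (P f)` would have degree
`m + k` for every `k`, while `Hᵏ f` stays in `V_d`; this contradicts the bound. As `c ∉ ℤ`, the
exceptional degree `d + c` never occurs.
-/

open Polynomial

namespace Polynomial

variable {R : Type*} [Semiring R]

theorem exists_map_degreeLE_le (P : R[X] →ₗ[R] R[X]) (d : ℕ) :
    ∃ N : ℕ, (degreeLE R d).map P ≤ degreeLE R N := by
  classical
  refine ⟨(Finset.range (d + 1)).sup fun i => (P (X ^ i)).natDegree, ?_⟩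
  rw [degreeLE_eq_span_X_pow, Submodule.map_span, Submodule.span_le]
  rintro _ ⟨_, hX, rfl⟩
  obtain ⟨i, hi, rfl⟩ := Finset.mem_image.1 (Finset.mem_coe.1 hX)
  exact mem_degreeLE.2 <| natDegree_le_iff_degree_le.1 <|
    Finset.le_sup (f := fun i => (P (X ^ i)).natDegree) hi

section Commute

variable {H P : Module.End R R[X]} {d : ℕ}

theorem mem_degreeLE_iterate_and_natDegree_iterate
    (hinv : (degreeLE R d).map H ≤ degreeLE R d)
    (hraise : ∀ g : R[X], d < g.natDegree → (H g).natDegree = g.natDegree + 1)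
    (hcomm : Commute H P) {f : R[X]} (hf : f ∈ degreeLE R d) (hPf : d < (P f).natDegree) :
    ∀ k : ℕ, H^[k] f ∈ degreeLE R d ∧ (P (H^[k] f)).natDegree = (P f).natDegree + k
  | 0 => ⟨hf, rfl⟩
  | k + 1 => by
    obtain ⟨hmem, hdeg⟩ := mem_degreeLE_iterate_and_natDegree_iterate hinv hraise hcomm hf hPf k
    have hPH : P (H (H^[k] f)) = H (P (H^[k] f)) := (LinearMap.congr_fun hcomm.eq _).symm
    refine ⟨Function.iterate_succ_apply' H k f ▸ hinv ⟨_, hmem, rfl⟩, ?_⟩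
    rw [Function.iterate_succ_apply', hPH, hraise _ (by omega), hdeg]
    rfl

theorem map_degreeLE_le_of_commute
    (hinv : (degreeLE R d).map H ≤ degreeLE R d)
    (hraise : ∀ g : R[X], d < g.natDegree → (H g).natDegree = g.natDegree + 1)
    (hcomm : Commute H P) :
    (degreeLE R d).map P ≤ degreeLE R d := by
  rintro _ ⟨f, hf, rfl⟩
  by_contra hPf
  replace hPf : d < (P f).natDegree := by
    rw [mem_degreeLE, ← natDegree_le_iff_degree_le] at hPf
    omega
  obtain ⟨N, hN⟩ := exists_map_degreeLE_le P d
  obtain ⟨hmem, hdeg⟩ :=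
    mem_degreeLE_iterate_and_natDegree_iterate hinv hraise hcomm hf hPf (N + 1)
  have hbound := natDegree_le_iff_degree_le.2 (mem_degreeLE.1 (hN ⟨_, hmem, rfl⟩))
  omega

end Commute

end Polynomial

theorem stmt_3 (c : ℂ) (hc : ∀ n : ℤ, c ≠ (n : ℂ)) (d : ℕ)
    (H P : Polynomial ℂ →ₗ[ℂ] Polynomial ℂ)
    (hraise : ∀ (g : Polynomial ℂ) (p' : ℕ), p' ≠ 0 → (p' : ℂ) ≠ c →
      g.degree = ((d + p' : ℕ) : WithBot ℕ) → (H g).degree = ((d + p' + 1 : ℕ) : WithBot ℕ))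
    (hinv : ∀ g : Polynomial ℂ, g.degree ≤ (d : ℕ) → (H g).degree ≤ (d : ℕ))
    (hcomm : H ∘ₗ P = P ∘ₗ H) :
    ∀ g : Polynomial ℂ, g.degree ≤ (d : ℕ) → (P g).degree ≤ (d : ℕ) := by
  have hraise' (g : ℂ[X]) (hg : d < g.natDegree) : (H g).natDegree = g.natDegree + 1 := by
    have hgdeg : g.degree = ((d + (g.natDegree - d) : ℕ) : WithBot ℕ) := by
      rw [degree_eq_natDegree (ne_zero_of_natDegree_gt hg), Nat.add_sub_cancel' hg.le]
    have hHg := hraise g _ (by omega) (fun h => hc _ (by exact_mod_cast h.symm)) hgdeg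
    rw [natDegree_eq_of_degree_eq_some hHg]
    omega
  have hinv' : (degreeLE ℂ d).map H ≤ degreeLE ℂ d :=
    Submodule.map_le_iff_le_comap.2 fun f hf => mem_degreeLE.2 (hinv f (mem_degreeLE.1 hf))
  intro g hg
  exact mem_degreeLE.1 <|
    map_degreeLE_le_of_commute hinv' hraise' hcomm ⟨g, mem_degreeLE.2 hg, rfl⟩
end
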